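/- arXiv:0902.1439 — 3 statements merged into one kernel-verified Lean document; each statement's English description precedes it below -/
import Mathlib

section
/- Karlin–Novikov criterion: let X, Y be nonnegative random variables with finite means and distribution functions F, G. Suppose E[X] ≤ E[Y] and there exists t₀ ≥ 0 such that F(t) ≤ G(t) for all t ≤ t₀ and F(t) ≥ G(t) for all t ≥ t₀. Then X ≤_icx Y, i.e., F^SL(t) ≤ G^SL(t) for all t ≥ 0. -/
open MeasureTheory Set

/-!
Write `F̄ = 1 - F` and `Ḡ = 1 - G` for the survival functions; by the layer-cake formula
`E[X] = ∫₀^∞ F̄` and `E[Y] = ∫₀^∞ Ḡ`, and the crossing condition says `F̄ ≥ Ḡ` on `(0, t₀)` and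
`F̄ ≤ Ḡ` on `(t₀, ∞)`. Beyond the crossing point the stop-loss inequality is the pointwise one
integrated over `(t, ∞)`. Before it, `∫_t^∞ F̄ = E[X] - ∫_0^t F̄ ≤ E[Y] - ∫_0^t Ḡ = ∫_t^∞ Ḡ`.
-/

theorem setIntegral_Ioi_le_of_single_crossing {f g : ℝ → ℝ} {a t₀ t : ℝ}
    (hf : IntegrableOn f (Ioi a)) (hg : IntegrableOn g (Ioi a))
    (hfg : ∫ x in Ioi a, f x ≤ ∫ x in Ioi a, g x)
    (hbelow : ∀ x ∈ Ioo a t₀, g x ≤ f x) (habove : ∀ x ∈ Ioi t₀, f x ≤ g x) (ht : a ≤ t) :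
    ∫ x in Ioi t, f x ≤ ∫ x in Ioi t, g x := by
  rcases le_total t₀ t with ht₀ | ht₀
  · exact setIntegral_mono_on (hf.mono_set (Ioi_subset_Ioi ht)) (hg.mono_set (Ioi_subset_Ioi ht))
      measurableSet_Ioi fun x hx => habove x (ht₀.trans_lt hx)
  · have hhead : ∫ x in a..t, g x ≤ ∫ x in a..t, f x :=
      intervalIntegral.integral_mono_on_of_le_Ioo ht
        ((intervalIntegrable_iff_integrableOn_Ioc_of_le ht).2 (hg.mono_set Ioc_subset_Ioi_self))
        ((intervalIntegrable_iff_integrableOn_Ioc_of_le ht).2 (hf.mono_set Ioc_subset_Ioi_self))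
        fun x hx => hbelow x ⟨hx.1, hx.2.trans_le ht₀⟩
    linarith [intervalIntegral.integral_Ioi_sub_Ioi hf ht,
      intervalIntegral.integral_Ioi_sub_Ioi hg ht]

namespace MeasureTheory

variable {Ω : Type*} [MeasurableSpace Ω] {μ : Measure Ω} {X : Ω → ℝ}

theorem Integrable.integrableOn_Ioi_measureReal_lt (hX : Integrable X μ) (hX0 : 0 ≤ᵐ[μ] X) :
    IntegrableOn (fun t => μ.real {ω | t < X ω}) (Ioi 0) := by
  have hanti : Antitone fun t : ℝ => μ {ω | t < X ω} :=
    fun _ _ hst => measure_mono fun _ h => hst.trans_lt h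
  refine ⟨hanti.measurable.ennreal_toReal.aestronglyMeasurable, ?_⟩
  calc ∫⁻ t in Ioi 0, ‖μ.real {ω | t < X ω}‖ₑ
      ≤ ∫⁻ t in Ioi 0, μ {ω | t < X ω} := lintegral_mono fun _ => by
        rw [Real.enorm_of_nonneg measureReal_nonneg]
        exact ENNReal.ofReal_toReal_le
    _ = ∫⁻ ω, ENNReal.ofReal (X ω) ∂μ := (lintegral_eq_lintegral_meas_lt μ hX0 hX.aemeasurable).symm
    _ < ⊤ := hX.lintegral_lt_top

theorem measureReal_lt_eq_one_sub [IsProbabilityMeasure μ] (hX : AEMeasurable X μ) (x : ℝ) :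
    μ.real {ω | x < X ω} = 1 - μ.real {ω | X ω ≤ x} := by
  have hcompl : {ω | x < X ω} = {ω | X ω ≤ x}ᶜ := by ext; simp
  rw [hcompl]
  exact probReal_compl_eq_one_sub₀ (hX.nullMeasurable measurableSet_Iic)

end MeasureTheory

theorem karlin_novikov_general
    {Ω : Type*} [MeasurableSpace Ω] (μ : Measure Ω) [IsProbabilityMeasure μ]
    (X Y : Ω → ℝ)
    (hX0 : ∀ ω, 0 ≤ X ω) (hY0 : ∀ ω, 0 ≤ Y ω)
    (hXint : Integrable X μ) (hYint : Integrable Y μ)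
    (F G : ℝ → ℝ)
    (hF : ∀ x, F x = (μ {ω | X ω ≤ x}).toReal)
    (hG : ∀ x, G x = (μ {ω | Y ω ≤ x}).toReal)
    (hmean : ∫ ω, X ω ∂μ ≤ ∫ ω, Y ω ∂μ)
    (hcross : ∃ t₀ : ℝ, 0 ≤ t₀ ∧
      (∀ t ≤ t₀, F t ≤ G t) ∧ (∀ t, t₀ ≤ t → G t ≤ F t)) :
    ∀ t : ℝ, 0 ≤ t →
      ∫ x in Ioi t, (1 - F x) ≤ ∫ x in Ioi t, (1 - G x) := by
  obtain ⟨t₀, -, hbelow, habove⟩ := hcross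
  have hX0' : 0 ≤ᵐ[μ] X := .of_forall hX0
  have hY0' : 0 ≤ᵐ[μ] Y := .of_forall hY0
  have hFsurv : ∀ x, 1 - F x = μ.real {ω | x < X ω} := fun x => by
    rw [hF, measureReal_lt_eq_one_sub hXint.aemeasurable, measureReal_def]
  have hGsurv : ∀ x, 1 - G x = μ.real {ω | x < Y ω} := fun x => by
    rw [hG, measureReal_lt_eq_one_sub hYint.aemeasurable, measureReal_def]
  intro t ht
  simp only [hFsurv, hGsurv]
  refine setIntegral_Ioi_le_of_single_crossing (t₀ := t₀) (hXint.integrableOn_Ioi_measureReal_lt hX0')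
    (hYint.integrableOn_Ioi_measureReal_lt hY0') ?_ (fun x hx => ?_) (fun x hx => ?_) ht
  · rwa [← hXint.integral_eq_integral_meas_lt hX0', ← hYint.integral_eq_integral_meas_lt hY0']
  · linarith [hFsurv x, hGsurv x, hbelow x hx.2.le]
  · linarith [hFsurv x, hGsurv x, habove x hx.le]

/-- Karlin–Novikov criterion: if `E[X] ≤ E[Y]` and there is a `t₀ ≥ 0` such that
`F(t) ≤ G(t)` for `t ≤ t₀` and `F(t) ≥ G(t)` for `t ≥ t₀`, then `X ≤_icx Y`,
i.e. `F^SL(t) ≤ G^SL(t)` for all `t ≥ 0`. -/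
theorem karlin_novikov
    {Ω : Type*} [MeasurableSpace Ω] (μ : Measure Ω) [IsProbabilityMeasure μ]
    (X Y : Ω → ℝ) (hXm : Measurable X) (hYm : Measurable Y)
    (hX0 : ∀ ω, 0 ≤ X ω) (hY0 : ∀ ω, 0 ≤ Y ω)
    (hXint : Integrable X μ) (hYint : Integrable Y μ)
    (F G : ℝ → ℝ)
    (hF : ∀ x, F x = (μ {ω | X ω ≤ x}).toReal)
    (hG : ∀ x, G x = (μ {ω | Y ω ≤ x}).toReal)
    (hmean : ∫ ω, X ω ∂μ ≤ ∫ ω, Y ω ∂μ)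
    (hcross : ∃ t₀ : ℝ, 0 ≤ t₀ ∧
      (∀ t ≤ t₀, F t ≤ G t) ∧ (∀ t, t₀ ≤ t → G t ≤ F t)) :
    ∀ t : ℝ, 0 ≤ t →
      ∫ x in Ioi t, (1 - F x) ≤ ∫ x in Ioi t, (1 - G x) :=
  karlin_novikov_general μ X Y hX0 hY0 hXint hYint F G hF hG hmean hcross
end

section
/- Let f_n, g_n, g, h be continuous real functions on a compact metric space K with f_n = g_n + c_n h, where c_n ≥ 0 and c_n → ∞. Assume h ≤ 0, A := {t ∈ K : h(t) = 0} is nonempty, and g_n → g uniformly on K. Then lim_{n→∞} sup_{t∈K} f_n(t) = sup_{t∈A} g(t). -/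
/-! On the contact set `A = {h = 0}` the penalty `c n * h` vanishes, so `sup f n ≥ g n s₀`, which
tends to `sup_A glim` at a maximiser `s₀ ∈ A`. Conversely, for `b > sup_A glim` the open sets
`{glim + C h < b}` increase with `C` and cover the compact `K`, so a single one is all of `K`;
since `c n → ∞` and `g n → glim` uniformly, eventually `f n < b` everywhere. -/

open Set Filter Topology

theorem tendsto_iSup_of_tendsto_of_eventually_le {α ι β : Type*}
    [ConditionallyCompleteLinearOrder β] [TopologicalSpace β] [OrderTopology β]
    [DenselyOrdered β] [NoMaxOrder β] {l : Filter α} {u : α → ι → β} {M : β} (i₀ : ι)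
    (hlow : Tendsto (fun n => u n i₀) l (𝓝 M)) (hup : ∀ b > M, ∀ᶠ n in l, ∀ i, u n i ≤ b) :
    Tendsto (fun n => ⨆ i, u n i) l (𝓝 M) := by
  rw [tendsto_order]
  refine ⟨fun a ha => ?_, fun b hb => ?_⟩
  · obtain ⟨b, hb⟩ := exists_gt M
    filter_upwards [hlow.eventually (eventually_gt_nhds ha), hup b hb] with n hn hbdd
    exact hn.trans_le (le_ciSup ⟨b, forall_mem_range.2 hbdd⟩ i₀)
  · have : Nonempty ι := ⟨i₀⟩
    obtain ⟨b', hMb', hb'b⟩ := exists_between hb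
    filter_upwards [hup b' hMb'] with n hn
    exact (ciSup_le hn).trans_lt hb'b

theorem eventually_atTop_forall_add_mul_lt {K : Type*} [TopologicalSpace K] [CompactSpace K]
    {φ h : K → ℝ} (hφ : Continuous φ) (hh : Continuous h) (hle : ∀ t, h t ≤ 0) {b : ℝ}
    (hb : ∀ t, h t = 0 → φ t < b) :
    ∀ᶠ C in atTop, ∀ t, φ t + C * h t < b := by
  set U : ℝ → Set K := fun C => {t | φ t + C * h t < b}
  have hU_mono : Monotone U := fun C C' hCC' t (ht : φ t + C * h t < b) =>
    show φ t + C' * h t < b by nlinarith [hle t]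
  have hU_cover : univ ⊆ ⋃ C, U C := by
    intro t _
    rcases (hle t).lt_or_eq with hneg | hzero
    · obtain ⟨C, hC⟩ := exists_gt ((φ t - b) / -h t)
      refine mem_iUnion.2 ⟨C, ?_⟩
      rw [div_lt_iff₀ (neg_pos.2 hneg)] at hC
      show φ t + C * h t < b
      linarith
    · exact mem_iUnion.2 ⟨0, by simpa [U, hzero] using hb t hzero⟩
  obtain ⟨C, hC⟩ := isCompact_univ.elim_directed_cover U
    (fun C => isOpen_lt (hφ.add (continuous_const.mul hh)) continuous_const) hU_cover
    hU_mono.directed_le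
  exact eventually_atTop.2 ⟨C, fun C' hC' t => hU_mono hC' (hC (mem_univ t))⟩

theorem sup_limit_on_contact_set_general
    {K : Type*} [MetricSpace K] [CompactSpace K]
    (f g : ℕ → K → ℝ) (glim h : K → ℝ) (c : ℕ → ℝ)
    (hglim : Continuous glim) (hh : Continuous h)
    (hfgh : ∀ n t, f n t = g n t + c n * h t)
    (hc : Tendsto c atTop atTop)
    (hhle : ∀ t, h t ≤ 0)
    (hA : {t : K | h t = 0}.Nonempty)
    (hunif : TendstoUniformly g glim atTop) :
    Tendsto (fun n => ⨆ t : K, f n t) atTop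
      (nhds (sSup (glim '' {t : K | h t = 0}))) := by
  set A := {t : K | h t = 0}
  have hA_compact : IsCompact (glim '' A) :=
    ((isClosed_eq hh continuous_const).isCompact).image hglim
  obtain ⟨s₀, hs₀A, hs₀⟩ := hA_compact.sSup_mem (hA.image glim)
  refine tendsto_iSup_of_tendsto_of_eventually_le s₀ ?_ fun b hb => ?_
  · simpa [hfgh, show h s₀ = 0 from hs₀A, hs₀] using hunif.tendsto_at s₀
  obtain ⟨b', hMb', hb'b⟩ := exists_between hb
  have hpenalty : ∀ᶠ n in atTop, ∀ t, glim t + c n * h t < b' :=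
    hc.eventually <| eventually_atTop_forall_add_mul_lt hglim hh hhle fun t ht =>
      (le_csSup hA_compact.bddAbove (mem_image_of_mem glim ht)).trans_lt hMb'
  filter_upwards [hpenalty, Metric.tendstoUniformly_iff.1 hunif (b - b') (sub_pos.2 hb'b)]
    with n hn hgn t
  rw [hfgh]
  linarith [hn t, (abs_sub_lt_iff.1 (hgn t)).2]

/-- Lemma 1, supremum part: if `f_n = g_n + c_n h` on a compact metric space
`K`, with `c_n ≥ 0`, `c_n → ∞`, `h ≤ 0`, `A := {h = 0}` nonempty, and
`g_n → g` uniformly, then `sup_K f_n → sup_A g`. -/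
theorem sup_limit_on_contact_set
    {K : Type*} [MetricSpace K] [CompactSpace K]
    (f g : ℕ → K → ℝ) (glim h : K → ℝ) (c : ℕ → ℝ)
    (hf : ∀ n, Continuous (f n)) (hg : ∀ n, Continuous (g n))
    (hglim : Continuous glim) (hh : Continuous h)
    (hfgh : ∀ n t, f n t = g n t + c n * h t)
    (hc0 : ∀ n, 0 ≤ c n) (hc : Tendsto c atTop atTop)
    (hhle : ∀ t, h t ≤ 0)
    (hA : {t : K | h t = 0}.Nonempty)
    (hunif : TendstoUniformly g glim atTop) :
    Tendsto (fun n => ⨆ t : K, f n t) atTop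
      (nhds (sSup (glim '' {t : K | h t = 0}))) :=
  sup_limit_on_contact_set_general f g glim h c hglim hh hfgh hc hhle hA hunif
end

section
/- Let f_n, g_n, g, h be continuous real functions on [0, r] (r < ∞) with f_n = g_n + c_n h, where c_n ≥ 0, c_n → ∞, h ≤ 0, A := {h = 0} nonempty, and g_n → g uniformly. Then lim_{n→∞} ∫_0^r f_n^+(t) dt = ∫_{[0,r]∩A} g^+(t) dt. -/
open Set Filter MeasureTheory

/-- Lemma 1, integral part: if `f_n = g_n + c_n h` on `[0, r]`, with `c_n ≥ 0`,
`c_n → ∞`, `h ≤ 0`, `A := {h = 0}` nonempty, and `g_n → g` uniformly, then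
`∫_0^r f_n^+(t) dt → ∫_{[0,r] ∩ A} g^+(t) dt`. -/
theorem integral_pos_part_limit_on_contact_set
    (r : ℝ) (hr : 0 ≤ r)
    (f g : ℕ → ℝ → ℝ) (glim h : ℝ → ℝ) (c : ℕ → ℝ)
    (hf : ∀ n, ContinuousOn (f n) (Icc 0 r))
    (hg : ∀ n, ContinuousOn (g n) (Icc 0 r))
    (hglim : ContinuousOn glim (Icc 0 r)) (hh : ContinuousOn h (Icc 0 r))
    (hfgh : ∀ n, ∀ t ∈ Icc (0 : ℝ) r, f n t = g n t + c n * h t)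
    (hc0 : ∀ n, 0 ≤ c n) (hc : Tendsto c atTop atTop)
    (hhle : ∀ t ∈ Icc (0 : ℝ) r, h t ≤ 0)
    (hA : {t ∈ Icc (0 : ℝ) r | h t = 0}.Nonempty)
    (hunif : TendstoUniformlyOn g glim atTop (Icc 0 r)) :
    Tendsto (fun n => ∫ t in Icc (0 : ℝ) r, max (f n t) 0) atTop
      (nhds (∫ t in {t ∈ Icc (0 : ℝ) r | h t = 0}, max (glim t) 0)) := by
  set A : Set ℝ := {t ∈ Icc (0 : ℝ) r | h t = 0} with hAdef
  have hAsub : A ⊆ Icc (0 : ℝ) r := fun t ht => ht.1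
  have hAclosed : IsClosed A := by
    have : A = Icc (0 : ℝ) r ∩ h ⁻¹' {0} := by
      ext t; simp [hAdef, Set.mem_setOf_eq]
    rw [this]
    exact hh.preimage_isClosed_of_isClosed isClosed_Icc isClosed_singleton
  have hAmeas : MeasurableSet A := hAclosed.measurableSet
  -- RHS rewrite
  have hRHS : (∫ t in A, max (glim t) 0) =
      ∫ t in Icc (0 : ℝ) r, A.indicator (fun t => max (glim t) 0) t := by
    rw [MeasureTheory.setIntegral_indicator hAmeas, Set.inter_eq_right.mpr hAsub]
  rw [hRHS]
  -- dominated convergence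
  have hbound_int : IntegrableOn (fun t => |glim t| + 1) (Icc 0 r) volume := by
    exact (hglim.abs.add continuousOn_const).integrableOn_Icc
  apply MeasureTheory.tendsto_integral_filter_of_dominated_convergence
    (fun t => |glim t| + 1)
  · -- measurability
    filter_upwards with n
    exact (((hf n).sup continuousOn_const).aestronglyMeasurable measurableSet_Icc)
  · -- eventual bound
    have h1 : ∀ᶠ n in atTop, ∀ x ∈ Icc (0 : ℝ) r, dist (glim x) (g n x) < 1 := by
      exact (Metric.tendstoUniformlyOn_iff.mp hunif) 1 one_pos
    filter_upwards [h1] with n hn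
    filter_upwards [ae_restrict_mem measurableSet_Icc] with t ht
    have hle1 : f n t ≤ g n t := by
      rw [hfgh n t ht]
      nlinarith [hc0 n, hhle t ht]
    have hgb : g n t ≤ |glim t| + 1 := by
      have := hn t ht
      rw [Real.dist_eq] at this
      have : |glim t - g n t| < 1 := this
      have h2 := abs_sub_abs_le_abs_sub (g n t) (glim t)
      have h3 := le_abs_self (g n t)
      have h4 : |g n t - glim t| < 1 := by rwa [abs_sub_comm]
      linarith
    have : max (f n t) 0 ≤ |glim t| + 1 := by
      apply max_le (le_trans hle1 hgb) (by positivity)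
    rw [Real.norm_eq_abs, abs_of_nonneg (le_max_right _ _)]
    exact this
  · exact hbound_int
  · -- pointwise a.e. convergence
    filter_upwards [ae_restrict_mem measurableSet_Icc] with t ht
    by_cases hth : h t = 0
    · have htA : t ∈ A := ⟨ht, hth⟩
      rw [Set.indicator_of_mem htA]
      have hgt : Tendsto (fun n => g n t) atTop (nhds (glim t)) :=
        hunif.tendsto_at ht
      have : Tendsto (fun n => max (g n t) 0) atTop (nhds (max (glim t) 0)) :=
        hgt.max tendsto_const_nhds
      refine this.congr fun n => ?_
      rw [hfgh n t ht, hth, mul_zero, add_zero]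
    · have htA : t ∉ A := fun hmem => hth hmem.2
      rw [Set.indicator_of_notMem htA]
      have hneg : h t < 0 := lt_of_le_of_ne (hhle t ht) hth
      have hbot : Tendsto (fun n => c n * h t) atTop atBot :=
        hc.atTop_mul_const_of_neg hneg
      have hft : Tendsto (fun n => f n t) atTop atBot := by
        have := (hunif.tendsto_at ht).add_atBot hbot
        refine this.congr fun n => (hfgh n t ht).symm
      have hev : ∀ᶠ n in atTop, f n t < 0 := hft.eventually_lt_atBot 0
      refine Tendsto.congr' ?_ tendsto_const_nhds
      filter_upwards [hev] with n hn
      exact (max_eq_right hn.le).symm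
end
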